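/- Let G be a k-WVG with 3 players and 2 prizes p = (R, 1) where R > 1, with players labeled so that {1} ≻ {2} ≻ {3}. If {2,3} ≻ {1}, then G has no wMCD-stable outcome and no MCDT-stable outcome; in particular, the outcome (π, x) with π = [{2,3} | {1}] and x = (1, 1, R−1) is susceptible to a wMCD. -/
import Mathlib


open Finset
open scoped Classical

/-- A `k`-Prize Weighted Voting Game with `n` players `{0, ..., n-1}`:
weights, prize values in descending order, and a strict total order `pref` (`≻`)
on coalitions that refines the comparison of total weights. -/
structure kWVG (n k : ℕ) : Type where
  /-- the weights of the players -/
  w : Fin n → ℚ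
  w_pos : ∀ i, 0 < w i
  /-- the prize values, in descending order -/
  p : Fin k → ℚ
  p_pos : ∀ j, 0 < p j
  p_desc : ∀ j j' : Fin k, j ≤ j' → p j' ≤ p j
  k_pos : 0 < k
  k_le_n : k ≤ n
  /-- the strict total order `≻` on coalitions (tie-breaking order) -/
  pref : Finset (Fin n) → Finset (Fin n) → Prop
  pref_irrefl : ∀ A, ¬ pref A A
  pref_trans : ∀ A B C, pref A B → pref B C → pref A C
  pref_total : ∀ A B, A ≠ B → pref A B ∨ pref B A
  pref_weight : ∀ A B, (∑ i ∈ B, w i) < (∑ i ∈ A, w i) → pref A B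

variable {n k : ℕ}

/-- `π` is a partition of `D` into nonempty pairwise disjoint coalitions. -/
def IsPartition (π : Finset (Finset (Fin n))) (D : Finset (Fin n)) : Prop :=
  (∀ C ∈ π, C.Nonempty) ∧
  (∀ A ∈ π, ∀ B ∈ π, A ≠ B → Disjoint A B) ∧
  π.sup id = D

/-- The value `v(C, π)` of coalition `C` in the partition `π`: if `r` is the number of
coalitions of `π` that are `≻`-larger than `C` (so that `C` is the `(r+1)`-st largest
coalition of `π`), then `C` gets the `(r+1)`-st prize if `r < k`, and `0` otherwise. -/
noncomputable def coalitionValue (G : kWVG n k) (π : Finset (Finset (Fin n)))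
    (C : Finset (Fin n)) : ℚ :=
  if h : (π.filter (fun C' => G.pref C' C)).card < k then
    G.p ⟨(π.filter (fun C' => G.pref C' C)).card, h⟩
  else 0

/-- An outcome of the game `G`: a partition of all the players together with
nonnegative payoffs, where each coalition's payoffs sum to its value. -/
structure Outcome (G : kWVG n k) : Type where
  part : Finset (Finset (Fin n))
  ispart : IsPartition part Finset.univ
  x : Fin n → ℚ
  x_nonneg : ∀ i, 0 ≤ x i
  x_budget : ∀ C ∈ part, ∑ i ∈ C, x i = coalitionValue G part C

/-- A single-coalition deviation (SCD) from an outcome with payoffs `x`. -/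
def IsSCD (G : kWVG n k) (x : Fin n → ℚ) (C : Finset (Fin n)) : Prop :=
  C.Nonempty ∧
  ∀ π', IsPartition π' Finset.univ → C ∈ π' → (∑ i ∈ C, x i) < coalitionValue G π' C

/-- A deviating partition: a nonempty family of nonempty, pairwise disjoint coalitions
(that is, a partition of the nonempty set `D := πD.sup id ⊆ N` of deviators). -/
def IsDevPartition (πD : Finset (Finset (Fin n))) : Prop :=
  πD.Nonempty ∧ (∀ C ∈ πD, C.Nonempty) ∧ (∀ A ∈ πD, ∀ B ∈ πD, A ≠ B → Disjoint A B)

/-- A multi-coalition deviation (MCD) from an outcome with payoffs `x`. -/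
def IsMCD (G : kWVG n k) (x : Fin n → ℚ) (πD : Finset (Finset (Fin n))) : Prop :=
  IsDevPartition πD ∧
  ∀ π', IsPartition π' Finset.univ → πD ⊆ π' →
    ∀ C ∈ πD, (∑ i ∈ C, x i) < coalitionValue G π' C

/-- A weak multi-coalition deviation (wMCD) from an outcome with payoffs `x`. -/
def IswMCD (G : kWVG n k) (x : Fin n → ℚ) (πD : Finset (Finset (Fin n))) : Prop :=
  IsDevPartition πD ∧
  ∀ π', IsPartition π' Finset.univ → πD ⊆ π' →
    (∀ C ∈ πD, (∑ i ∈ C, x i) ≤ coalitionValue G π' C) ∧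
    (∃ C ∈ πD, (∑ i ∈ C, x i) < coalitionValue G π' C)

/-- A multi-coalition deviation with inter-coalition transfer (MCDT) from an outcome
with payoffs `x`. -/
def IsMCDT (G : kWVG n k) (x : Fin n → ℚ) (πD : Finset (Finset (Fin n))) : Prop :=
  IsDevPartition πD ∧
  ∀ π', IsPartition π' Finset.univ → πD ⊆ π' →
    (∑ i ∈ πD.sup id, x i) < ∑ C ∈ πD, coalitionValue G π' C

/-- An outcome is SCD-stable if no SCD from it exists. -/
def SCDStable (G : kWVG n k) (ω : Outcome G) : Prop := ¬ ∃ C, IsSCD G ω.x C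

/-- An outcome is MCD-stable if no MCD from it exists. -/
def MCDStable (G : kWVG n k) (ω : Outcome G) : Prop := ¬ ∃ πD, IsMCD G ω.x πD

/-- An outcome is wMCD-stable if no wMCD from it exists. -/
def wMCDStable (G : kWVG n k) (ω : Outcome G) : Prop := ¬ ∃ πD, IswMCD G ω.x πD

/-- An outcome is MCDT-stable if no MCDT from it exists. -/
def MCDTStable (G : kWVG n k) (ω : Outcome G) : Prop := ¬ ∃ πD, IsMCDT G ω.x πD


/-! ### Auxiliary lemmas -/

lemma kWVG.pref_asymm (G : kWVG n k) {A B : Finset (Fin n)} (hAB : G.pref A B) :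
    ¬ G.pref B A := fun h' => G.pref_irrefl A (G.pref_trans A B A hAB h')

lemma kWVG.w_le_of_pref (G : kWVG n k) {A B : Finset (Fin n)} (hAB : G.pref A B) :
    (∑ i ∈ B, G.w i) ≤ ∑ i ∈ A, G.w i := by
  by_contra hlt
  push_neg at hlt
  exact G.pref_asymm hAB (G.pref_weight B A hlt)

lemma cv_of_card {m : ℕ} (G : kWVG n k) (π : Finset (Finset (Fin n)))
    (C : Finset (Fin n)) (hc : (π.filter (fun C' => G.pref C' C)).card = m)
    (hm : m < k) : coalitionValue G π C = G.p ⟨m, hm⟩ := by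
  unfold coalitionValue
  rw [dif_pos (by rw [hc]; exact hm)]
  congr 1
  exact Fin.ext hc

lemma cv_of_card_ge (G : kWVG n k) (π : Finset (Finset (Fin n)))
    (C : Finset (Fin n)) (hc : k ≤ (π.filter (fun C' => G.pref C' C)).card) :
    coalitionValue G π C = 0 := by
  unfold coalitionValue
  rw [dif_neg (not_lt.2 hc)]

lemma part3_cases (π : Finset (Finset (Fin 3)))
    (hp : IsPartition π Finset.univ) :
    π = {{0,1,2}} ∨ π = {{0},{1},{2}} ∨ π = {{0,1},{2}} ∨ π = {{0,2},{1}} ∨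
      π = {{1,2},{0}} := by
  have aux : ∀ π : Finset (Finset (Fin 3)),
      ((∀ C ∈ π, C.Nonempty) ∧ (∀ A ∈ π, ∀ B ∈ π, A ≠ B → Disjoint A B) ∧
        π.sup id = Finset.univ) →
      π = {{0,1,2}} ∨ π = {{0},{1},{2}} ∨ π = {{0,1},{2}} ∨ π = {{0,2},{1}} ∨
        π = {{1,2},{0}} := by
    set_option maxRecDepth 10000 in decide
  exact aux π hp

lemma singleton_wMCD (G : kWVG n k) (x : Fin n → ℚ) (C : Finset (Fin n))
    (hC : C.Nonempty)
    (hval : ∀ π', IsPartition π' Finset.univ → C ∈ π' →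
      (∑ i ∈ C, x i) < coalitionValue G π' C) :
    IswMCD G x {C} := by
  refine ⟨⟨⟨C, mem_singleton_self C⟩, ?_, ?_⟩, ?_⟩
  · intro A hA; rw [mem_singleton] at hA; exact hA ▸ hC
  · intro A hA B hB hne
    rw [mem_singleton] at hA hB
    exact absurd (hA.trans hB.symm) hne
  · intro π' hπ' hsub
    have hmem : C ∈ π' := hsub (mem_singleton_self C)
    refine ⟨?_, ⟨C, mem_singleton_self C, hval π' hπ' hmem⟩⟩
    intro D hD
    rw [mem_singleton] at hD
    exact hD ▸ (hval π' hπ' hmem).le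

lemma wMCD_to_MCDT (G : kWVG n k) (x : Fin n → ℚ) (πD : Finset (Finset (Fin n)))
    (hw : IswMCD G x πD) : IsMCDT G x πD := by
  obtain ⟨hdev, hmain⟩ := hw
  refine ⟨hdev, fun π' hπ' hsub => ?_⟩
  obtain ⟨hle, hstrict⟩ := hmain π' hπ' hsub
  have hsum : (∑ i ∈ πD.sup id, x i) = ∑ C ∈ πD, ∑ i ∈ C, x i := by
    rw [Finset.sup_eq_biUnion]
    exact Finset.sum_biUnion (fun A hA B hB hne => hdev.2.2 A hA B hB hne)
  rw [hsum]
  exact Finset.sum_lt_sum hle hstrict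

/-- In a 3-player 2-prize game with prizes `(R, 1)`, `R > 1`, players labelled in
`≻`-descending order, if `{2,3} ≻ {1}` then the game has no wMCD-stable outcome and
no MCDT-stable outcome; in particular the outcome with partition `[{2,3} | {1}]` and
payoffs `(1, 1, R-1)` is susceptible to a wMCD. -/
theorem three_player_two_prize_case2_no_wMCD_stable (G : kWVG 3 2) (R : ℚ) (hR : 1 < R)
    (hp0 : G.p 0 = R) (hp1 : G.p 1 = 1)
    (h12 : G.pref {0} {1}) (h23 : G.pref {1} {2})
    (h : G.pref {1, 2} {0}) :
    (∀ ω : Outcome G, ¬ wMCDStable G ω) ∧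
    (∀ ω : Outcome G, ¬ MCDTStable G ω) ∧
    (∀ ω : Outcome G, ω.part = {{1, 2}, {0}} → ω.x = ![1, 1, R - 1] →
      ∃ πD, IswMCD G ω.x πD) := by
  classical
  -- basic consequences of the preference order
  have h13 : G.pref {0} {2} := G.pref_trans _ _ _ h12 h23
  have hw12 : (∑ i ∈ ({1} : Finset (Fin 3)), G.w i) ≤ ∑ i ∈ ({0} : Finset (Fin 3)), G.w i :=
    G.w_le_of_pref h12
  have hw23 : (∑ i ∈ ({2} : Finset (Fin 3)), G.w i) ≤ ∑ i ∈ ({1} : Finset (Fin 3)), G.w i :=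
    G.w_le_of_pref h23
  simp only [Finset.sum_singleton] at hw12 hw23
  have hA : G.pref {0, 1} {2} := by
    apply G.pref_weight
    rw [Finset.sum_singleton, Finset.sum_pair (by decide : (0 : Fin 3) ≠ 1)]
    have := G.w_pos 0
    linarith
  have hB : G.pref {0, 2} {1} := by
    apply G.pref_weight
    rw [Finset.sum_singleton, Finset.sum_pair (by decide : (0 : Fin 3) ≠ 2)]
    have := G.w_pos 2
    linarith
  -- coalition values in the five partitions
  have v1 : coalitionValue G {{0,1,2}} {0,1,2} = R := by
    rw [cv_of_card G _ _ (m := 0) ?_ (by norm_num)]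
    · exact hp0
    · rw [Finset.filter_singleton, if_neg (G.pref_irrefl _)]
      rfl
  have v2a : coalitionValue G {{0},{1},{2}} {0} = R := by
    rw [cv_of_card G _ _ (m := 0) ?_ (by norm_num)]
    · exact hp0
    · rw [show ({{0},{1},{2}} : Finset (Finset (Fin 3))) =
        insert {0} (insert {1} {{2}}) from rfl,
        Finset.filter_insert, if_neg (G.pref_irrefl _),
        Finset.filter_insert, if_neg (G.pref_asymm h12),
        Finset.filter_singleton, if_neg (G.pref_asymm h13)]
      rfl
  have v2b : coalitionValue G {{0},{1},{2}} {1} = 1 := by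
    rw [cv_of_card G _ _ (m := 1) ?_ (by norm_num)]
    · exact hp1
    · rw [show ({{0},{1},{2}} : Finset (Finset (Fin 3))) =
        insert {0} (insert {1} {{2}}) from rfl,
        Finset.filter_insert, if_pos h12,
        Finset.filter_insert, if_neg (G.pref_irrefl _),
        Finset.filter_singleton, if_neg (G.pref_asymm h23)]
      rfl
  have v2c : coalitionValue G {{0},{1},{2}} {2} = 0 := by
    apply cv_of_card_ge
    rw [show ({{0},{1},{2}} : Finset (Finset (Fin 3))) =
      insert {0} (insert {1} {{2}}) from rfl,
      Finset.filter_insert, if_pos h13,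
      Finset.filter_insert, if_pos h23,
      Finset.filter_singleton, if_neg (G.pref_irrefl _)]
    decide
  have v3a : coalitionValue G {{0,1},{2}} {0,1} = R := by
    rw [cv_of_card G _ _ (m := 0) ?_ (by norm_num)]
    · exact hp0
    · rw [show ({{0,1},{2}} : Finset (Finset (Fin 3))) = insert {0,1} {{2}} from rfl,
        Finset.filter_insert, if_neg (G.pref_irrefl _),
        Finset.filter_singleton, if_neg (G.pref_asymm hA)]
      rfl
  have v3b : coalitionValue G {{0,1},{2}} {2} = 1 := by
    rw [cv_of_card G _ _ (m := 1) ?_ (by norm_num)]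
    · exact hp1
    · rw [show ({{0,1},{2}} : Finset (Finset (Fin 3))) = insert {0,1} {{2}} from rfl,
        Finset.filter_insert, if_pos hA,
        Finset.filter_singleton, if_neg (G.pref_irrefl _)]
      rfl
  have v4a : coalitionValue G {{0,2},{1}} {0,2} = R := by
    rw [cv_of_card G _ _ (m := 0) ?_ (by norm_num)]
    · exact hp0
    · rw [show ({{0,2},{1}} : Finset (Finset (Fin 3))) = insert {0,2} {{1}} from rfl,
        Finset.filter_insert, if_neg (G.pref_irrefl _),
        Finset.filter_singleton, if_neg (G.pref_asymm hB)]
      rfl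
  have v4b : coalitionValue G {{0,2},{1}} {1} = 1 := by
    rw [cv_of_card G _ _ (m := 1) ?_ (by norm_num)]
    · exact hp1
    · rw [show ({{0,2},{1}} : Finset (Finset (Fin 3))) = insert {0,2} {{1}} from rfl,
        Finset.filter_insert, if_pos hB,
        Finset.filter_singleton, if_neg (G.pref_irrefl _)]
      rfl
  have v5a : coalitionValue G {{1,2},{0}} {1,2} = R := by
    rw [cv_of_card G _ _ (m := 0) ?_ (by norm_num)]
    · exact hp0
    · rw [show ({{1,2},{0}} : Finset (Finset (Fin 3))) = insert {1,2} {{0}} from rfl,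
        Finset.filter_insert, if_neg (G.pref_irrefl _),
        Finset.filter_singleton, if_neg (G.pref_asymm h)]
      rfl
  have v5b : coalitionValue G {{1,2},{0}} {0} = 1 := by
    rw [cv_of_card G _ _ (m := 1) ?_ (by norm_num)]
    · exact hp1
    · rw [show ({{1,2},{0}} : Finset (Finset (Fin 3))) = insert {1,2} {{0}} from rfl,
        Finset.filter_insert, if_pos h,
        Finset.filter_singleton, if_neg (G.pref_irrefl _)]
      rfl
  -- partitions containing a given coalition
  have mem12 : ∀ π', IsPartition π' Finset.univ → ({1,2} : Finset (Fin 3)) ∈ π' →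
      π' = {{1,2},{0}} := by
    intro π' hπ' hm
    rcases part3_cases π' hπ' with h' | h' | h' | h' | h' <;> subst h' <;>
      first | rfl | (exact absurd hm (by decide))
  have mem01 : ∀ π', IsPartition π' Finset.univ → ({0,1} : Finset (Fin 3)) ∈ π' →
      π' = {{0,1},{2}} := by
    intro π' hπ' hm
    rcases part3_cases π' hπ' with h' | h' | h' | h' | h' <;> subst h' <;>
      first | rfl | (exact absurd hm (by decide))
  have mem02 : ∀ π', IsPartition π' Finset.univ → ({0,2} : Finset (Fin 3)) ∈ π' →
      π' = {{0,2},{1}} := by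
    intro π' hπ' hm
    rcases part3_cases π' hπ' with h' | h' | h' | h' | h' <;> subst h' <;>
      first | rfl | (exact absurd hm (by decide))
  have mem0 : ∀ π', IsPartition π' Finset.univ → ({0} : Finset (Fin 3)) ∈ π' →
      π' = {{0},{1},{2}} ∨ π' = {{1,2},{0}} := by
    intro π' hπ' hm
    rcases part3_cases π' hπ' with h' | h' | h' | h' | h' <;> subst h' <;>
      first | (left; rfl) | (right; rfl) | (exact absurd hm (by decide))
  have mem0mem1 : ∀ π', IsPartition π' Finset.univ → ({0} : Finset (Fin 3)) ∈ π' →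
      ({1} : Finset (Fin 3)) ∈ π' → π' = {{0},{1},{2}} := by
    intro π' hπ' hm0 hm1
    rcases part3_cases π' hπ' with h' | h' | h' | h' | h' <;> subst h' <;>
      first | rfl | (exact absurd hm0 (by decide)) | (exact absurd hm1 (by decide))
  -- the standard deviations
  have dev12 : ∀ x : Fin 3 → ℚ, x 1 + x 2 < R → IswMCD G x {({1,2} : Finset (Fin 3))} := by
    intro x hx
    apply singleton_wMCD G x _ (by decide)
    intro π' hπ' hm
    rw [mem12 π' hπ' hm, v5a, Finset.sum_pair (by decide : (1 : Fin 3) ≠ 2)]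
    exact hx
  have dev01 : ∀ x : Fin 3 → ℚ, x 0 + x 1 < R → IswMCD G x {({0,1} : Finset (Fin 3))} := by
    intro x hx
    apply singleton_wMCD G x _ (by decide)
    intro π' hπ' hm
    rw [mem01 π' hπ' hm, v3a, Finset.sum_pair (by decide : (0 : Fin 3) ≠ 1)]
    exact hx
  have dev02 : ∀ x : Fin 3 → ℚ, x 0 + x 2 < R → IswMCD G x {({0,2} : Finset (Fin 3))} := by
    intro x hx
    apply singleton_wMCD G x _ (by decide)
    intro π' hπ' hm
    rw [mem02 π' hπ' hm, v4a, Finset.sum_pair (by decide : (0 : Fin 3) ≠ 2)]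
    exact hx
  -- the deviation by singletons {0} and {1}
  have dev0and1 : ∀ x : Fin 3 → ℚ, x 0 < R → x 1 ≤ 1 →
      IswMCD G x {({0} : Finset (Fin 3)), ({1} : Finset (Fin 3))} := by
    intro x hx0 hx1
    refine ⟨⟨⟨{0}, by decide⟩, ?_, ?_⟩, ?_⟩
    · intro C hC
      fin_cases hC <;> decide
    · intro A hA B hB hne
      fin_cases hA <;> fin_cases hB <;> first | (exact absurd rfl hne) | decide
    · intro π' hπ' hsub
      have hm0 : ({0} : Finset (Fin 3)) ∈ π' := hsub (by decide)
      have hm1 : ({1} : Finset (Fin 3)) ∈ π' := hsub (by decide)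
      rw [mem0mem1 π' hπ' hm0 hm1]
      constructor
      · intro C hC
        have : C = {0} ∨ C = {1} := by
          have := hC
          fin_cases this <;> simp
        rcases this with rfl | rfl
        · rw [v2a, Finset.sum_singleton]; exact hx0.le
        · rw [v2b, Finset.sum_singleton]; exact hx1
      · exact ⟨{0}, by decide, by rw [v2a, Finset.sum_singleton]; exact hx0⟩
  -- main claim: every outcome admits a wMCD
  have key : ∀ ω : Outcome G, ∃ πD, IswMCD G ω.x πD := by
    intro ω
    have hx0 := ω.x_nonneg 0
    have hx1 := ω.x_nonneg 1
    have hx2 := ω.x_nonneg 2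
    rcases part3_cases ω.part ω.ispart with hp | hp | hp | hp | hp
    · -- grand coalition
      have hb := ω.x_budget {0,1,2} (by rw [hp]; exact mem_singleton_self _)
      rw [hp, v1, Finset.sum_insert (by decide), Finset.sum_pair (by decide : (1 : Fin 3) ≠ 2)]
        at hb
      rcases eq_or_lt_of_le hx0 with h0 | h0
      · -- x 0 = 0 : player 0 deviates alone
        refine ⟨{({0} : Finset (Fin 3))}, singleton_wMCD G ω.x _ (by decide) ?_⟩
        intro π' hπ' hm
        rcases mem0 π' hπ' hm with h' | h' <;> subst h'
        · rw [v2a, Finset.sum_singleton, ← h0]; linarith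
        · rw [v5b, Finset.sum_singleton, ← h0]; linarith
      · exact ⟨_, dev12 ω.x (by linarith)⟩
    · -- all singletons
      have hb1 := ω.x_budget {1} (by rw [hp]; decide)
      have hb2 := ω.x_budget {2} (by rw [hp]; decide)
      rw [hp, v2b, Finset.sum_singleton] at hb1
      rw [hp, v2c, Finset.sum_singleton] at hb2
      exact ⟨_, dev12 ω.x (by rw [hb1, hb2]; linarith)⟩
    · -- {0,1} and {2}
      have hb1 := ω.x_budget {0,1} (by rw [hp]; decide)
      have hb2 := ω.x_budget {2} (by rw [hp]; decide)
      rw [hp, v3a, Finset.sum_pair (by decide : (0 : Fin 3) ≠ 1)] at hb1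
      rw [hp, v3b, Finset.sum_singleton] at hb2
      rcases lt_or_ge (ω.x 1) (R - 1) with hc | hc
      · exact ⟨_, dev12 ω.x (by linarith)⟩
      · rcases lt_or_ge 1 (ω.x 1) with hc' | hc'
        · exact ⟨_, dev02 ω.x (by linarith)⟩
        · exact ⟨_, dev0and1 ω.x (by linarith) hc'⟩
    · -- {0,2} and {1}
      have hb1 := ω.x_budget {0,2} (by rw [hp]; decide)
      have hb2 := ω.x_budget {1} (by rw [hp]; decide)
      rw [hp, v4a, Finset.sum_pair (by decide : (0 : Fin 3) ≠ 2)] at hb1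
      rw [hp, v4b, Finset.sum_singleton] at hb2
      rcases lt_or_ge (ω.x 2) (R - 1) with hc | hc
      · exact ⟨_, dev12 ω.x (by linarith)⟩
      · rcases lt_or_ge 1 (ω.x 2) with hc' | hc'
        · exact ⟨_, dev01 ω.x (by linarith)⟩
        · exact ⟨_, dev0and1 ω.x (by linarith) (by linarith)⟩
    · -- {1,2} and {0}
      have hb1 := ω.x_budget {1,2} (by rw [hp]; decide)
      have hb2 := ω.x_budget {0} (by rw [hp]; decide)
      rw [hp, v5a, Finset.sum_pair (by decide : (1 : Fin 3) ≠ 2)] at hb1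
      rw [hp, v5b, Finset.sum_singleton] at hb2
      rcases lt_or_ge 1 (ω.x 1) with hc | hc
      · exact ⟨_, dev02 ω.x (by linarith)⟩
      · rcases lt_or_ge 1 (ω.x 2) with hc' | hc'
        · exact ⟨_, dev01 ω.x (by linarith)⟩
        · exact ⟨_, dev0and1 ω.x (by linarith) hc⟩
  refine ⟨fun ω hs => hs (key ω), fun ω hs => ?_, fun ω _ _ => key ω⟩
  obtain ⟨πD, hπD⟩ := key ω
  exact hs ⟨πD, wMCD_to_MCDT G ω.x πD hπD⟩
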